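/- Let A = A₀ ⊕ A₁ be a superspace with two even bilinear operations [·,·] and ∘ and an even linear map α, and let L(A), with its bracket [−,−] and the even linear map φ defined by φ(a[m]) = α(a)[m] and φ(u[m]) = α(u)[m], be the affinization of A. If (L(A), [−,−], φ) is a Hom-Lie superalgebra, then (A, [·,·], ∘, α) is a super Hom-Gel'fand-Dorfman bialgebra. -/

import Mathlib

noncomputable section

/-- The sign `(-1)^{|x||y|}` attached to parities `i, j` in `ℤ₂`. -/
def sg (i j : ZMod 2) : ℂ := (-1 : ℂ) ^ (i.val * j.val)

variable {A : Type*} [AddCommGroup A] [Module ℂ A]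

/-- `gr` makes `A` into a superspace: `A = A₀ ⊕ A₁`. -/
def IsSupergrading (gr : ZMod 2 → Submodule ℂ A) : Prop :=
  (∀ x : A, ∃ x0 ∈ gr 0, ∃ x1 ∈ gr 1, x = x0 + x1) ∧ (gr 0 ⊓ gr 1 = ⊥)

/-- An even linear map: it preserves the grading. -/
def EvenLin (gr : ZMod 2 → Submodule ℂ A) (α : A →ₗ[ℂ] A) : Prop :=
  ∀ i : ZMod 2, ∀ x ∈ gr i, α x ∈ gr i

/-- An even bilinear map: it adds parities. -/
def EvenBilin (gr : ZMod 2 → Submodule ℂ A) (m : A →ₗ[ℂ] A →ₗ[ℂ] A) : Prop :=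
  ∀ i j : ZMod 2, ∀ x ∈ gr i, ∀ y ∈ gr j, m x y ∈ gr (i + j)

/-- A Hom-Lie superalgebra structure on the superspace `(A, gr)`. -/
def HomLieSuper (gr : ZMod 2 → Submodule ℂ A) (br : A →ₗ[ℂ] A →ₗ[ℂ] A)
    (α : A →ₗ[ℂ] A) : Prop :=
  EvenLin gr α ∧ EvenBilin gr br ∧
  (∀ (i j : ZMod 2), ∀ x ∈ gr i, ∀ y ∈ gr j, br x y = -(sg i j • br y x)) ∧
  (∀ (i j k : ZMod 2), ∀ x ∈ gr i, ∀ y ∈ gr j, ∀ z ∈ gr k,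
    sg i k • br (br x y) (α z) + sg i j • br (br y z) (α x)
      + sg j k • br (br z x) (α y) = 0)

/-- A Hom-Novikov superalgebra structure on the superspace `(A, gr)`. -/
def HomNovikovSuper (gr : ZMod 2 → Submodule ℂ A) (c : A →ₗ[ℂ] A →ₗ[ℂ] A)
    (α : A →ₗ[ℂ] A) : Prop :=
  EvenLin gr α ∧ EvenBilin gr c ∧
  (∀ (i j k : ZMod 2), ∀ x ∈ gr i, ∀ y ∈ gr j, ∀ z ∈ gr k,
    c (c x y) (α z) - c (α x) (c y z) = sg i j • (c (c y x) (α z) - c (α y) (c x z))) ∧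
  (∀ (i j k : ZMod 2), ∀ x ∈ gr i, ∀ y ∈ gr j, ∀ z ∈ gr k,
    c (c x y) (α z) = sg j k • c (c x z) (α y))

/-- A super Hom-Gel'fand-Dorfman bialgebra structure on the superspace `(A, gr)`. -/
def SuperHomGD (gr : ZMod 2 → Submodule ℂ A) (br c : A →ₗ[ℂ] A →ₗ[ℂ] A)
    (α : A →ₗ[ℂ] A) : Prop :=
  HomLieSuper gr br α ∧ HomNovikovSuper gr c α ∧
  (∀ (i j k : ZMod 2), ∀ x ∈ gr i, ∀ y ∈ gr j, ∀ z ∈ gr k,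
    br (c x y) (α z) - sg j k • br (c x z) (α y) + c (br x y) (α z)
      - sg j k • c (br x z) (α y) - c (α x) (br y z) = 0)

/-- A Lie superalgebra structure on the superspace `(A, gr)`. -/
def LieSuper (gr : ZMod 2 → Submodule ℂ A) (br : A →ₗ[ℂ] A →ₗ[ℂ] A) : Prop :=
  EvenBilin gr br ∧
  (∀ (i j : ZMod 2), ∀ x ∈ gr i, ∀ y ∈ gr j, br x y = -(sg i j • br y x)) ∧
  (∀ (i j k : ZMod 2), ∀ x ∈ gr i, ∀ y ∈ gr j, ∀ z ∈ gr k,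
    sg i k • br (br x y) z + sg i j • br (br y z) x + sg j k • br (br z x) y = 0)

/-- A Novikov superalgebra structure on the superspace `(A, gr)`. -/
def NovikovSuper (gr : ZMod 2 → Submodule ℂ A) (c : A →ₗ[ℂ] A →ₗ[ℂ] A) : Prop :=
  EvenBilin gr c ∧
  (∀ (i j k : ZMod 2), ∀ x ∈ gr i, ∀ y ∈ gr j, ∀ z ∈ gr k,
    c (c x y) z - c x (c y z) = sg i j • (c (c y x) z - c y (c x z))) ∧
  (∀ (i j k : ZMod 2), ∀ x ∈ gr i, ∀ y ∈ gr j, ∀ z ∈ gr k,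
    c (c x y) z = sg j k • c (c x z) y)

/-- A super Gel'fand-Dorfman bialgebra structure on the superspace `(A, gr)`. -/
def SuperGD (gr : ZMod 2 → Submodule ℂ A) (br c : A →ₗ[ℂ] A →ₗ[ℂ] A) : Prop :=
  LieSuper gr br ∧ NovikovSuper gr c ∧
  (∀ (i j k : ZMod 2), ∀ x ∈ gr i, ∀ y ∈ gr j, ∀ z ∈ gr k,
    br (c x y) z - sg j k • br (c x z) y + c (br x y) z
      - sg j k • c (br x z) y - c x (br y z) = 0)


/-- The grading induced on `σ →₀ A` by a grading of `A` (coefficientwise). -/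
def grFinsupp {A : Type*} [AddCommGroup A] [Module ℂ A] (σ : Type*)
    (gr : ZMod 2 → Submodule ℂ A) (i : ZMod 2) : Submodule ℂ (σ →₀ A) where
  carrier := {f | ∀ s : σ, f s ∈ gr i}
  add_mem' := by
    intro f g hf hg s
    rw [Finsupp.add_apply]
    exact add_mem (hf s) (hg s)
  zero_mem' := by
    intro s
    rw [Finsupp.zero_apply]
    exact zero_mem _
  smul_mem' := by
    intro t f hf s
    rw [Finsupp.smul_apply]
    exact Submodule.smul_mem _ t (hf s)

/-- The bracket of the affinization `L(A)`, determined on the homogeneous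
generators `a[m] = a ⊗ tᵐ` (for `a ∈ A₀`) and `u[m] = u ⊗ t^{m+1/2}` (for `u ∈ A₁`). -/
def AffBracket {A : Type*} [AddCommGroup A] [Module ℂ A]
    (gr : ZMod 2 → Submodule ℂ A) (br c : A →ₗ[ℂ] A →ₗ[ℂ] A)
    (B : (ℤ →₀ A) →ₗ[ℂ] (ℤ →₀ A) →ₗ[ℂ] (ℤ →₀ A)) : Prop :=
  (∀ (m n : ℤ), ∀ a ∈ gr 0, ∀ b ∈ gr 0,
    B (Finsupp.single m a) (Finsupp.single n b)
      = Finsupp.single (m + n) (br a b)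
        + Finsupp.single (m + n - 1) ((m : ℂ) • c a b - (n : ℂ) • c b a)) ∧
  (∀ (m n : ℤ), ∀ a ∈ gr 0, ∀ u ∈ gr 1,
    B (Finsupp.single m a) (Finsupp.single n u)
      = Finsupp.single (m + n) (br a u)
        + Finsupp.single (m + n - 1)
            ((m : ℂ) • c a u - ((n : ℂ) + (1 / 2 : ℂ)) • c u a)) ∧
  (∀ (m n : ℤ), ∀ u ∈ gr 1, ∀ a ∈ gr 0,
    B (Finsupp.single n u) (Finsupp.single m a)
      = Finsupp.single (m + n) (br u a)
        + Finsupp.single (m + n - 1)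
            (((n : ℂ) + (1 / 2 : ℂ)) • c u a - (m : ℂ) • c a u)) ∧
  (∀ (m n : ℤ), ∀ u ∈ gr 1, ∀ v ∈ gr 1,
    B (Finsupp.single m u) (Finsupp.single n v)
      = Finsupp.single (m + n + 1) (br u v)
        + Finsupp.single (m + n)
            (((m : ℂ) + (1 / 2 : ℂ)) • c u v + ((n : ℂ) + (1 / 2 : ℂ)) • c v u))

/-!
Record `x ⊗ t^d ∈ L(A)` as `x[s]`, where `d = affDegree |x| s = s + |x|/2`. In these terms the four
bracket formulas are one: `[x[s], y[t]]` is `[x,y]` at index `s + t + |x||y|` plus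
`d x∘y - (-1)^{|x||y|} d' y∘x` (`affLower`) one index below. Hence the super Jacobi identity of
`L(A)` at `x[s], y[t], α(z)[r]` has exactly three components. The top one is the Hom-Jacobi identity
of `A`. The other two are polynomials in the exponents of `x[s]`, `y[t]`, `z[r]`, and finite
differences in `s` and `t` isolate their coefficients: the linear coefficient of the middle component
is the compatibility condition, and the quadratic coefficients of the lowest component are the two
Hom-Novikov identities. Skew-symmetry of `[·,·]` is the top component of skew-symmetry in `L(A)`.
-/

def affDegree (i : ZMod 2) (s : ℤ) : ℂ := s + (i.val : ℂ) / 2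

def affShift (i j : ZMod 2) : ℤ := i.val * j.val

def affLower (c : A →ₗ[ℂ] A →ₗ[ℂ] A) (i j : ZMod 2) (s t : ℤ) (x y : A) : A :=
  affDegree i s • c x y - (sg i j * affDegree j t) • c y x

lemma affDegree_add (i j : ZMod 2) (s t : ℤ) :
    affDegree (i + j) (s + t + affShift i j) = affDegree i s + affDegree j t := by
  have h : (i + j).val + 2 * (i.val * j.val) = i.val + j.val := by revert i j; decide
  have h' : ((i + j).val : ℂ) + 2 * (i.val * j.val) = i.val + j.val := by exact_mod_cast h
  simp only [affDegree, affShift]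
  push_cast
  linear_combination h' / 2

lemma affDegree_add_one (i : ZMod 2) (s : ℤ) : affDegree i (s + 1) = affDegree i s + 1 := by
  simp only [affDegree]
  push_cast
  ring

lemma affDegree_sub_one (i : ZMod 2) (s : ℤ) : affDegree i (s - 1) = affDegree i s - 1 := by
  simp only [affDegree]
  push_cast
  ring

lemma affShift_comm (i j : ZMod 2) : affShift i j = affShift j i := by
  rw [affShift, affShift, mul_comm]

lemma affShift_add_affShift (i j k : ZMod 2) :
    affShift i j + affShift (i + j) k = affShift j k + affShift (j + k) i := by
  revert i j k; decide

lemma sg_comm (i j : ZMod 2) : sg i j = sg j i := by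
  rw [sg, sg, mul_comm]

lemma sg_mul_self (i j : ZMod 2) : sg i j * sg i j = 1 := by
  rw [sg, ← pow_add, ← two_mul, pow_mul]
  norm_num

lemma sg_add_left (i j k : ZMod 2) : sg (i + j) k = sg i k * sg j k := by
  have h : (i + j).val * k.val % 2 = (i.val * k.val + j.val * k.val) % 2 := by
    revert i j k; decide
  rw [sg, sg, sg, ← pow_add, neg_one_pow_eq_pow_mod_two, h, ← neg_one_pow_eq_pow_mod_two]

lemma zmod_two_eq_zero_or_one (i : ZMod 2) : i = 0 ∨ i = 1 := by
  revert i; decide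

lemma single_add_single_add_single_eq_zero_iff {M : Type*} [AddCommMonoid M] {n : ℤ}
    {a b c : M} :
    Finsupp.single n a + Finsupp.single (n - 1) b + Finsupp.single (n - 1 - 1) c = 0 ↔
      a = 0 ∧ b = 0 ∧ c = 0 := by
  classical
  refine ⟨fun h => ?_, by rintro ⟨rfl, rfl, rfl⟩; simp⟩
  have hc := fun m => DFunLike.congr_fun h m
  simp only [Finsupp.add_apply, Finsupp.single_apply, Finsupp.coe_zero, Pi.zero_apply] at hc
  refine ⟨?_, ?_, ?_⟩
  · simpa [show n - 1 - 1 ≠ n by omega] using hc n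
  · simpa [show n ≠ n - 1 by omega] using hc (n - 1)
  · simpa [show n ≠ n - 1 - 1 by omega, show n - 1 ≠ n - 1 - 1 by omega] using hc (n - 1 - 1)

lemma single_mem_grFinsupp {gr : ZMod 2 → Submodule ℂ A} {i : ZMod 2} {x : A} (hx : x ∈ gr i)
    (s : ℤ) : Finsupp.single s x ∈ grFinsupp ℤ gr i := by
  classical
  intro t
  rw [Finsupp.single_apply]
  split_ifs
  · exact hx
  · exact zero_mem _

section Affinization

variable {gr : ZMod 2 → Submodule ℂ A} {br c : A →ₗ[ℂ] A →ₗ[ℂ] A} {α : A →ₗ[ℂ] A}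
  {B : (ℤ →₀ A) →ₗ[ℂ] (ℤ →₀ A) →ₗ[ℂ] (ℤ →₀ A)} {i j k : ZMod 2} {x y z : A}

lemma EvenBilin.affLower_mem (hce : EvenBilin gr c) (hx : x ∈ gr i) (hy : y ∈ gr j)
    (s t : ℤ) : affLower c i j s t x y ∈ gr (i + j) :=
  sub_mem (Submodule.smul_mem _ _ (hce i j x hx y hy))
    (Submodule.smul_mem _ _ (add_comm j i ▸ hce j i y hy x hx))

lemma AffBracket.single_single (hB : AffBracket gr br c B) (hx : x ∈ gr i) (hy : y ∈ gr j)
    (s t : ℤ) :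
    B (Finsupp.single s x) (Finsupp.single t y) =
      Finsupp.single (s + t + affShift i j) (br x y)
        + Finsupp.single (s + t + affShift i j - 1) (affLower c i j s t x y) := by
  obtain ⟨h00, h01, h10, h11⟩ := hB
  obtain rfl | rfl := zmod_two_eq_zero_or_one i <;>
    obtain rfl | rfl := zmod_two_eq_zero_or_one j <;>
    simp only [affLower, affDegree, affShift, sg, ZMod.val_zero, ZMod.val_one] <;> push_cast
  · simpa using h00 s t x hx y hy
  · simpa using h01 s t x hx y hy
  · rw [h10 t s x hx y hy, add_comm t s]
    norm_num
  · rw [h11 s t x hx y hy, add_sub_cancel_right]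
    congr 2
    module

lemma AffBracket.single_single_single (hB : AffBracket gr br c B) (hbre : EvenBilin gr br)
    (hce : EvenBilin gr c) (hx : x ∈ gr i) (hy : y ∈ gr j) (hz : z ∈ gr k) {s t r N : ℤ}
    (hN : s + t + affShift i j + r + affShift (i + j) k = N) :
    B (B (Finsupp.single s x) (Finsupp.single t y)) (Finsupp.single r z) =
      Finsupp.single N (br (br x y) z)
        + Finsupp.single (N - 1) (affLower c (i + j) k (s + t + affShift i j) r (br x y) z
            + br (affLower c i j s t x y) z)
        + Finsupp.single (N - 1 - 1)
            (affLower c (i + j) k (s + t + affShift i j - 1) r (affLower c i j s t x y) z) := by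
  rw [hB.single_single hx hy, map_add, LinearMap.add_apply,
    hB.single_single (hbre i j x hx y hy) hz, hB.single_single (hce.affLower_mem hx hy s t) hz,
    Finsupp.single_add,
    show s + t + affShift i j - 1 + r + affShift (i + j) k = N - 1 by omega,
    show s + t + affShift i j + r + affShift (i + j) k - 1 = N - 1 by omega, hN]
  abel

lemma skew_of_affinization (hB : AffBracket gr br c B)
    (hHL : HomLieSuper (grFinsupp ℤ gr) B (Finsupp.mapRange.linearMap α))
    (hx : x ∈ gr i) (hy : y ∈ gr j) : br x y = -(sg i j • br y x) := by
  classical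
  have h := hHL.2.2.1 i j _ (single_mem_grFinsupp hx 0) _ (single_mem_grFinsupp hy 0)
  rw [hB.single_single hx hy, hB.single_single hy hx, affShift_comm j i] at h
  simpa [Finsupp.single_apply] using DFunLike.congr_fun h (0 + 0 + affShift i j)

lemma jacobi_coeffs_of_affinization (hB : AffBracket gr br c B) (hbre : EvenBilin gr br)
    (hce : EvenBilin gr c) (hαe : EvenLin gr α)
    (hHL : HomLieSuper (grFinsupp ℤ gr) B (Finsupp.mapRange.linearMap α))
    (hx : x ∈ gr i) (hy : y ∈ gr j) (hz : z ∈ gr k) (s t r : ℤ) :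
    sg i k • br (br x y) (α z) + sg i j • br (br y z) (α x)
        + sg j k • br (br z x) (α y) = 0 ∧
    sg i k • (affLower c (i + j) k (s + t + affShift i j) r (br x y) (α z)
          + br (affLower c i j s t x y) (α z))
      + sg i j • (affLower c (j + k) i (t + r + affShift j k) s (br y z) (α x)
          + br (affLower c j k t r y z) (α x))
      + sg j k • (affLower c (k + i) j (r + s + affShift k i) t (br z x) (α y)
          + br (affLower c k i r s z x) (α y)) = 0 ∧
    sg i k • affLower c (i + j) k (s + t + affShift i j - 1) r (affLower c i j s t x y) (α z)
      + sg i j • affLower c (j + k) i (t + r + affShift j k - 1) s (affLower c j k t r y z) (α x)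
      + sg j k • affLower c (k + i) j (r + s + affShift k i - 1) t (affLower c k i r s z x) (α y)
      = 0 := by
  have hJ := hHL.2.2.2 i j k _ (single_mem_grFinsupp hx s) _ (single_mem_grFinsupp hy t) _
    (single_mem_grFinsupp hz r)
  simp only [Finsupp.mapRange.linearMap_apply, Finsupp.mapRange_single] at hJ
  set N := s + t + affShift i j + r + affShift (i + j) k
  have hijk := affShift_add_affShift i j k
  have hkij := affShift_add_affShift k i j
  rw [hB.single_single_single hbre hce hx hy (hαe k z hz) (N := N) rfl,
    hB.single_single_single hbre hce hy hz (hαe i x hx) (N := N) (by omega),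
    hB.single_single_single hbre hce hz hx (hαe j y hy) (N := N) (by omega)] at hJ
  refine (single_add_single_add_single_eq_zero_iff (n := N)).mp (Eq.trans ?_ hJ)
  simp only [smul_add, Finsupp.smul_single, Finsupp.single_add]
  abel

lemma novikov_left_of_affinization (hB : AffBracket gr br c B) (hbre : EvenBilin gr br)
    (hce : EvenBilin gr c) (hαe : EvenLin gr α)
    (hHL : HomLieSuper (grFinsupp ℤ gr) B (Finsupp.mapRange.linearMap α))
    (hx : x ∈ gr i) (hy : y ∈ gr j) (hz : z ∈ gr k) :
    c (c x y) (α z) - c (α x) (c y z) = sg i j • (c (c y x) (α z) - c (α y) (c x z)) := by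
  have h := fun s t => (jacobi_coeffs_of_affinization hB hbre hce hαe hHL hx hy hz s t 0).2.2
  have h₀₀ := h 0 0
  have h₁₀ := h (0 + 1) 0
  have h₀₁ := h 0 (0 + 1)
  have h₁₁ := h (0 + 1) (0 + 1)
  simp only [affLower, affDegree_sub_one, affDegree_add, affDegree_add_one, sg_add_left, map_sub,
    map_smul, LinearMap.sub_apply, LinearMap.smul_apply] at h₀₀ h₁₀ h₀₁ h₁₁
  rw [sg_comm j i, sg_comm k i, sg_comm k j] at h₀₀ h₁₀ h₀₁ h₁₁
  linear_combination (norm := skip) sg i k • (h₁₁ - h₁₀ - h₀₁ + h₀₀)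
  match_scalars <;> grind [sg_mul_self]

lemma novikov_right_of_affinization (hB : AffBracket gr br c B) (hbre : EvenBilin gr br)
    (hce : EvenBilin gr c) (hαe : EvenLin gr α)
    (hHL : HomLieSuper (grFinsupp ℤ gr) B (Finsupp.mapRange.linearMap α))
    (hx : x ∈ gr i) (hy : y ∈ gr j) (hz : z ∈ gr k) :
    c (c x y) (α z) = sg j k • c (c x z) (α y) := by
  have h := fun s => (jacobi_coeffs_of_affinization hB hbre hce hαe hHL hx hy hz s 0 0).2.2
  have h₀ := h 0
  have h₁ := h (0 + 1)
  have h₂ := h (0 + 1 + 1)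
  simp only [affLower, affDegree_sub_one, affDegree_add, affDegree_add_one, sg_add_left, map_sub,
    map_smul, LinearMap.sub_apply, LinearMap.smul_apply] at h₀ h₁ h₂
  rw [sg_comm j i, sg_comm k i, sg_comm k j] at h₀ h₁ h₂
  linear_combination (norm := skip) (sg i k / 2) • (h₂ - 2 • h₁ + h₀)
  match_scalars <;> grind [sg_mul_self]

lemma compatibility_of_affinization (hB : AffBracket gr br c B) (hbre : EvenBilin gr br)
    (hce : EvenBilin gr c) (hαe : EvenLin gr α)
    (hHL : HomLieSuper (grFinsupp ℤ gr) B (Finsupp.mapRange.linearMap α))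
    (hx : x ∈ gr i) (hy : y ∈ gr j) (hz : z ∈ gr k) :
    br (c x y) (α z) - sg j k • br (c x z) (α y) + c (br x y) (α z)
      - sg j k • c (br x z) (α y) - c (α x) (br y z) = 0 := by
  have h := fun s => (jacobi_coeffs_of_affinization hB hbre hce hαe hHL hx hy hz s 0 0).2.1
  have h₀ := h 0
  have h₁ := h (0 + 1)
  have hzx := skew_of_affinization hB hHL hz hx
  simp only [affLower, affDegree_add, affDegree_add_one, sg_add_left, map_sub, map_smul, map_neg,
    LinearMap.sub_apply, LinearMap.smul_apply, LinearMap.neg_apply, hzx] at h₀ h₁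
  rw [sg_comm j i, sg_comm k i, sg_comm k j] at h₀ h₁
  linear_combination (norm := skip) sg i k • (h₁ - h₀)
  match_scalars <;> grind [sg_mul_self]

end Affinization

theorem superHomGD_of_affinization_general
    {A : Type*} [AddCommGroup A] [Module ℂ A]
    (gr : ZMod 2 → Submodule ℂ A)
    (br c : A →ₗ[ℂ] A →ₗ[ℂ] A) (α : A →ₗ[ℂ] A)
    (hbre : EvenBilin gr br) (hce : EvenBilin gr c) (hαe : EvenLin gr α)
    (B : (ℤ →₀ A) →ₗ[ℂ] (ℤ →₀ A) →ₗ[ℂ] (ℤ →₀ A))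
    (hB : AffBracket gr br c B)
    (hHL : HomLieSuper (grFinsupp ℤ gr) B (Finsupp.mapRange.linearMap α)) :
    SuperHomGD gr br c α :=
  ⟨⟨hαe, hbre, fun _ _ _ hx _ hy => skew_of_affinization hB hHL hx hy,
      fun _ _ _ _ hx _ hy _ hz =>
        (jacobi_coeffs_of_affinization hB hbre hce hαe hHL hx hy hz 0 0 0).1⟩,
    ⟨hαe, hce,
      fun _ _ _ _ hx _ hy _ hz => novikov_left_of_affinization hB hbre hce hαe hHL hx hy hz,
      fun _ _ _ _ hx _ hy _ hz => novikov_right_of_affinization hB hbre hce hαe hHL hx hy hz⟩,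
    fun _ _ _ _ hx _ hy _ hz => compatibility_of_affinization hB hbre hce hαe hHL hx hy hz⟩

/-- If the affinization `(L(A), [−,−], φ)`, with `φ(x[m]) = α(x)[m]`,
is a Hom-Lie superalgebra, then `(A, [·,·], ∘, α)` is a super Hom-Gel'fand-Dorfman
bialgebra. -/
theorem superHomGD_of_affinization
    {A : Type*} [AddCommGroup A] [Module ℂ A]
    (gr : ZMod 2 → Submodule ℂ A) (hgr : IsSupergrading gr)
    (br c : A →ₗ[ℂ] A →ₗ[ℂ] A) (α : A →ₗ[ℂ] A)
    (hbre : EvenBilin gr br) (hce : EvenBilin gr c) (hαe : EvenLin gr α)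
    (B : (ℤ →₀ A) →ₗ[ℂ] (ℤ →₀ A) →ₗ[ℂ] (ℤ →₀ A))
    (hB : AffBracket gr br c B)
    (hHL : HomLieSuper (grFinsupp ℤ gr) B (Finsupp.mapRange.linearMap α)) :
    SuperHomGD gr br c α :=
  superHomGD_of_affinization_general gr br c α hbre hce hαe B hB hHL

end
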